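/- arXiv:2504.02235 — 6 statements merged into one kernel-verified Lean document; each statement's English description precedes it below -/
import Mathlib

section
/- Let Λ be a finite metric lattice with growth constant γ and dimension D, let ℓ ≥ 1, and let H = ∑_{i∈Λ} h_{i[ℓ]} be an operator on H_Λ where each h_{i[ℓ]} is supported on the ball i[ℓ] and ‖h_{i[ℓ]}‖ ≤ 𝔤. Then for every site i₀ and every m ≥ 0, the iterated commutator satisfies ‖ad_H^m(h_{i₀[ℓ]})‖ ≤ 𝔤 · m! · (2γ(2ℓ)^D 𝔤)^m, where ad_H(A) := HA − AH. -/
/-! If `V` is supported on the `ℓ`-neighbourhood of a set `T` of at most `n` sites, then `h_j`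
commutes with `V` unless `j` lies within `2ℓ` of `T`. Hence `ad_H V` is a sum of at most
`n γ (2ℓ)^D` commutators `[h_j, V]`, each of norm at most `2𝔤‖V‖` and supported on the
`ℓ`-neighbourhood of `T ∪ {j}`. Iterating, the number of sites grows by one per step, so the
counting factors multiply to `n (n + 1) ⋯ (n + m - 1)`, which is `m!` for `T = {i₀}`. -/

open scoped Classical ComplexOrder
noncomputable section

namespace CMI

/-- The operator norm of a complex matrix (norm of the induced map on Euclidean space). -/
def opNorm {n : Type*} [Fintype n] [DecidableEq n] (A : Matrix n n ℂ) : ℝ :=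
  ‖LinearMap.toContinuousLinearMap (Matrix.toEuclideanLin A)‖

/-- Configurations (computational-basis labels) of the sites in `S`. -/
abbrev Cfg (Λ : Type*) (d₀ : ℕ) (S : Set Λ) : Type _ := (i : S) → Fin d₀

/-- Configurations of the whole lattice. -/
abbrev FullCfg (Λ : Type*) (d₀ : ℕ) : Type _ := Λ → Fin d₀

/-- Operators on the Hilbert space of the whole lattice. -/
abbrev FullMat (Λ : Type*) (d₀ : ℕ) : Type _ :=
  Matrix (FullCfg Λ d₀) (FullCfg Λ d₀) ℂ

/-- An operator on `H_Λ` is supported on `S` if it has the form `A_S ⊗ 1_{Sᶜ}`. -/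
def MatSupportedOn {Λ : Type*} {d₀ : ℕ} (S : Set Λ) (A : FullMat Λ d₀) : Prop :=
  ∃ f : Cfg Λ d₀ S → Cfg Λ d₀ S → ℂ, ∀ x y : FullCfg Λ d₀,
    A x y = if ∀ i ∉ S, x i = y i then f (fun i => x i) (fun i => y i) else 0

/-- Growth bound: every ball of radius `r ≥ 1` contains at most `γ r^D` sites. -/
def GrowthBound (Λ : Type*) [Fintype Λ] [MetricSpace Λ] (γ : ℝ) (D : ℕ) : Prop :=
  ∀ (i : Λ) (r : ℝ), 1 ≤ r → ((Metric.closedBall i r).ncard : ℝ) ≤ γ * r ^ D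

/-- The commutator map `ad_H(V) = HV - VH`. -/
def adAction {n : Type*} [Fintype n] (H : Matrix n n ℂ) : Matrix n n ℂ → Matrix n n ℂ :=
  fun V => H * V - V * H

open Finset
open scoped Matrix.Norms.L2Operator

section commutator
variable {R ι : Type*}

theorem commutator_sum_eq_of_commute [Ring R] [Fintype ι] (h : ι → R) (V : R) (s : Finset ι)
    (hs : ∀ j ∉ s, Commute (h j) V) :
    (∑ j, h j) * V - V * ∑ j, h j = ∑ j ∈ s, (h j * V - V * h j) := by
  rw [sum_mul, mul_sum, ← sum_sub_distrib]
  exact (sum_subset (subset_univ s) fun j _ hj => sub_eq_zero.2 (hs j hj).eq).symm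

theorem iterate_commutator_sum [Ring R] (H : R) (m : ℕ) (s : Finset ι) (f : ι → R) :
    (fun V => H * V - V * H)^[m] (∑ j ∈ s, f j) =
      ∑ j ∈ s, (fun V => H * V - V * H)^[m] (f j) := by
  have hpow : (fun V => H * V - V * H)^[m] =
      ⇑((LinearMap.mulLeft ℤ H - LinearMap.mulRight ℤ H) ^ m) :=
    (Module.End.coe_pow (LinearMap.mulLeft ℤ H - LinearMap.mulRight ℤ H) m).symm
  rw [hpow]
  exact map_sum _ f s

theorem norm_commutator_le [NonUnitalNormedRing R] (a b : R) :
    ‖a * b - b * a‖ ≤ 2 * ‖a‖ * ‖b‖ :=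
  calc ‖a * b - b * a‖ ≤ ‖a * b‖ + ‖b * a‖ := norm_sub_le _ _
    _ ≤ ‖a‖ * ‖b‖ + ‖b‖ * ‖a‖ := add_le_add (norm_mul_le _ _) (norm_mul_le _ _)
    _ = 2 * ‖a‖ * ‖b‖ := by ring

theorem norm_iterate_commutator_le [NormedRing R] [Fintype ι] (h : ι → R) {g C : ℝ}
    (hg : 0 ≤ g) (hC : 0 ≤ C) (hh : ∀ j, ‖h j‖ ≤ g)
    (P : Finset ι → R → Prop) (N : Finset ι → Finset ι) (hN : ∀ T, (#(N T) : ℝ) ≤ #T * C)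
    (hcomm : ∀ T V, P T V → ∀ j ∉ N T, Commute (h j) V)
    (hstep : ∀ T V j, P T V → P (insert j T) (h j * V - V * h j))
    (m n : ℕ) {T : Finset ι} (hT : #T ≤ n) {V : R} (hV : P T V) :
    ‖(fun V => (∑ j, h j) * V - V * ∑ j, h j)^[m] V‖ ≤
      ‖V‖ * (2 * g * C) ^ m * n.ascFactorial m := by
  induction m generalizing n T V with
  | zero => simp
  | succ m ih =>
    set ad := fun V => (∑ j, h j) * V - V * ∑ j, h j
    set K := (2 * g * C) ^ m * ((n + 1).ascFactorial m : ℝ)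
    have hterm : ∀ j ∈ N T, ‖ad^[m] (h j * V - V * h j)‖ ≤ 2 * g * ‖V‖ * K := by
      intro j _
      calc ‖ad^[m] (h j * V - V * h j)‖ ≤ ‖h j * V - V * h j‖ * K :=
            (ih (n + 1) ((card_insert_le j T).trans (by omega)) (hstep T V j hV)).trans_eq
              (mul_assoc _ _ _)
        _ ≤ 2 * g * ‖V‖ * K := by
            gcongr
            exact (norm_commutator_le _ _).trans (by gcongr; exact hh j)
    calc ‖ad^[m + 1] V‖ = ‖∑ j ∈ N T, ad^[m] (h j * V - V * h j)‖ := by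
          have had : ad V = ∑ j ∈ N T, (h j * V - V * h j) :=
            commutator_sum_eq_of_commute h V _ (hcomm T V hV)
          rw [Function.iterate_succ_apply, had]
          exact congrArg norm (iterate_commutator_sum _ _ _ _)
      _ ≤ ∑ j ∈ N T, ‖ad^[m] (h j * V - V * h j)‖ := norm_sum_le _ _
      _ ≤ #(N T) * (2 * g * ‖V‖ * K) := by
          simpa using sum_le_card_nsmul _ _ _ hterm
      _ ≤ n * C * (2 * g * ‖V‖ * K) := by
          gcongr
          exact (hN T).trans (by gcongr)
      _ = ‖V‖ * (2 * g * C) ^ (m + 1) * n.ascFactorial (m + 1) := by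
          rw [Nat.ascFactorial_succ, ← Nat.succ_ascFactorial]
          push_cast
          ring

end commutator

section support
variable {Λ : Type*} {d₀ : ℕ} {S T : Set Λ} {A B : FullMat Λ d₀}

theorem MatSupportedOn.mono (hST : S ⊆ T) (hA : MatSupportedOn S A) : MatSupportedOn T A := by
  obtain ⟨f, hf⟩ := hA
  refine ⟨fun u v => if ∀ i : T, (i : Λ) ∉ S → u i = v i then
    f (fun i => u ⟨i, hST i.2⟩) (fun i => v ⟨i, hST i.2⟩) else 0, fun x y => ?_⟩
  rw [hf]
  by_cases hT : ∀ i ∉ T, x i = y i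
  · have hS : (∀ i ∉ S, x i = y i) ↔ ∀ i : T, (i : Λ) ∉ S → x i = y i :=
      ⟨fun h i hi => h i hi, fun h i hi => if hiT : i ∈ T then h ⟨i, hiT⟩ hi else hT i hiT⟩
    simp only [hS, if_pos hT]
  · rw [if_neg hT, if_neg fun hS => hT fun i hi => hS i fun hiS => hi (hST hiS)]

theorem MatSupportedOn.sub (hA : MatSupportedOn S A) (hB : MatSupportedOn S B) :
    MatSupportedOn S (A - B) := by
  obtain ⟨f, hf⟩ := hA
  obtain ⟨g, hg⟩ := hB
  exact ⟨f - g, fun x y => by rw [Matrix.sub_apply, hf, hg]; split_ifs <;> simp⟩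

theorem mul_apply_of_disjoint (hST : Disjoint S T) {f : Cfg Λ d₀ S → Cfg Λ d₀ S → ℂ}
    {g : Cfg Λ d₀ T → Cfg Λ d₀ T → ℂ}
    (hf : ∀ x y, A x y = if ∀ i ∉ S, x i = y i then f (fun i => x i) (fun i => y i) else 0)
    (hg : ∀ x y, B x y = if ∀ i ∉ T, x i = y i then g (fun i => x i) (fun i => y i) else 0)
    -- `[Fintype Λ]` comes after `hf hg` so that their `if`s use the classical decidability
    -- instance of `MatSupportedOn` rather than one derived from finiteness.
    [Fintype Λ] (x y : FullCfg Λ d₀) :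
    (A * B) x y = if ∀ i ∉ S ∪ T, x i = y i then
      f (fun i => x i) (fun i => y i) * g (fun i => x i) (fun i => y i) else 0 := by
  -- the only intermediate configuration contributing to the sum
  set w : FullCfg Λ d₀ := fun i => if i ∈ S then y i else x i
  rw [Matrix.mul_apply, sum_eq_single w]
  · have hxw : ∀ i ∉ S, x i = w i := fun i hi => (if_neg hi).symm
    have hwS : (fun i : S => w i) = fun i : S => y i := funext fun i => if_pos i.2
    have hwT : (fun i : T => w i) = fun i : T => x i :=
      funext fun i => if_neg (Set.disjoint_right.1 hST i.2)
    have hwy : (∀ i ∉ T, w i = y i) ↔ ∀ i ∉ S ∪ T, x i = y i := by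
      refine ⟨fun h i hi => ?_, fun h i hi => ?_⟩
      · rw [Set.mem_union, not_or] at hi
        exact (hxw i hi.1).trans (h i hi.2)
      · by_cases hiS : i ∈ S
        · exact if_pos hiS
        · exact (if_neg hiS).trans (h i (by simp [hiS, hi]))
    rw [hf, hg, if_pos hxw, hwS, hwT]
    simp only [hwy, mul_ite, mul_zero]
  · intro z _ hzw
    rw [hf, hg]
    by_cases hxz : ∀ i ∉ S, x i = z i
    · have hzy : ¬∀ i ∉ T, z i = y i := fun hzy => hzw <| funext fun i => by
        by_cases hiS : i ∈ S
        · exact (hzy i (Set.disjoint_left.1 hST hiS)).trans (if_pos hiS).symm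
        · exact (hxz i hiS).symm.trans (if_neg hiS).symm
      simp only [hzy, if_false, mul_zero]
    · rw [if_neg hxz, zero_mul]
  · simp

variable [Fintype Λ]

theorem sum_ite_agreeOff_eq_sum (x : FullCfg Λ d₀) (F : Cfg Λ d₀ S → ℂ) :
    ∑ z : FullCfg Λ d₀, (if ∀ i ∉ S, x i = z i then F (fun i => z i) else 0) = ∑ u, F u := by
  rw [← sum_filter]
  refine sum_nbij' (fun z i => z i) (fun u i => if h : i ∈ S then u ⟨i, h⟩ else x i)
    (by simp) (fun u _ => ?_) (fun z hz => ?_) (fun u _ => ?_) (fun z _ => rfl)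
  · simp only [mem_filter, mem_univ, true_and]
    intro i hi
    rw [dif_neg hi]
  · simp only [mem_filter, mem_univ, true_and] at hz
    funext i
    by_cases hi : i ∈ S
    · rw [dif_pos hi]
    · rw [dif_neg hi, hz i hi]
  · funext i
    simp

theorem MatSupportedOn.mul (hA : MatSupportedOn S A) (hB : MatSupportedOn S B) :
    MatSupportedOn S (A * B) := by
  obtain ⟨f, hf⟩ := hA
  obtain ⟨g, hg⟩ := hB
  refine ⟨fun u v => ∑ w, f u w * g w v, fun x y => ?_⟩
  simp only [Matrix.mul_apply, hf, hg]
  split_ifs with hxy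
  · rw [← sum_ite_agreeOff_eq_sum x]
    refine sum_congr rfl fun z _ => ?_
    by_cases hxz : ∀ i ∉ S, x i = z i
    · rw [if_pos (fun i hi => (hxz i hi).symm.trans (hxy i hi)), if_pos hxz, if_pos hxz]
    · simp [hxz]
  · refine sum_eq_zero fun z _ => ?_
    by_cases hxz : ∀ i ∉ S, x i = z i
    · have hzy : ¬∀ i ∉ S, z i = y i := fun hzy => hxy fun i hi => (hxz i hi).trans (hzy i hi)
      simp only [hzy, if_false, mul_zero]
    · rw [if_neg hxz, zero_mul]

theorem MatSupportedOn.commute (hST : Disjoint S T) (hA : MatSupportedOn S A)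
    (hB : MatSupportedOn T B) : Commute A B := by
  obtain ⟨f, hf⟩ := hA
  obtain ⟨g, hg⟩ := hB
  ext x y
  rw [mul_apply_of_disjoint hST hf hg, mul_apply_of_disjoint hST.symm hg hf]
  simp only [Set.union_comm T S, mul_comm (g _ _)]

theorem MatSupportedOn.commutator (hA : MatSupportedOn S A) (hB : MatSupportedOn T B) :
    MatSupportedOn (S ∪ T) (A * B - B * A) := by
  have hA' : MatSupportedOn (S ∪ T) A := hA.mono Set.subset_union_left
  have hB' : MatSupportedOn (S ∪ T) B := hB.mono Set.subset_union_right
  exact (hA'.mul hB').sub (hB'.mul hA')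

end support

section lattice
variable {Λ : Type*} [Fintype Λ] [MetricSpace Λ]

theorem card_biUnion_closedBall_le {γ r : ℝ} {D : ℕ} (hgrowth : GrowthBound Λ γ D)
    (hr : 1 ≤ r) (T : Finset Λ) :
    (#(T.biUnion fun c => (Metric.closedBall c r).toFinset) : ℝ) ≤ #T * (γ * r ^ D) :=
  calc (#(T.biUnion fun c => (Metric.closedBall c r).toFinset) : ℝ)
      ≤ ∑ c ∈ T, (#(Metric.closedBall c r).toFinset : ℝ) := by exact_mod_cast card_biUnion_le
    _ ≤ ∑ c ∈ T, γ * r ^ D := by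
        gcongr with c
        rw [← Set.ncard_eq_toFinset_card']
        exact hgrowth c r hr
    _ = #T * (γ * r ^ D) := by rw [sum_const, nsmul_eq_mul]

theorem disjoint_closedBall_biUnion {ℓ : ℝ} {j : Λ} {T : Finset Λ}
    (hj : j ∉ T.biUnion fun c => (Metric.closedBall c (2 * ℓ)).toFinset) :
    Disjoint (Metric.closedBall j ℓ) (⋃ c ∈ T, Metric.closedBall c ℓ) := by
  refine Set.disjoint_iUnion₂_right.2 fun c hc => Metric.closedBall_disjoint_closedBall ?_
  have : ¬dist j c ≤ 2 * ℓ := by simpa [hc] using fun h => hj (mem_biUnion.2 ⟨c, hc, h⟩)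
  linarith

end lattice

theorem iterated_commutator_norm_bound_general
    {Λ : Type*} [Fintype Λ] [MetricSpace Λ] (d₀ D : ℕ) (γ 𝔤 ℓ : ℝ)
    (hℓ : 1 ≤ ℓ) (hgrowth : GrowthBound Λ γ D)
    (h : Λ → FullMat Λ d₀)
    (hsupp : ∀ i : Λ, MatSupportedOn (Metric.closedBall i ℓ) (h i))
    (hnorm : ∀ i : Λ, opNorm (h i) ≤ 𝔤)
    (i₀ : Λ) (m : ℕ) :
    opNorm ((adAction (∑ i : Λ, h i))^[m] (h i₀)) ≤
      𝔤 * m.factorial * (2 * γ * (2 * ℓ) ^ D * 𝔤) ^ m := by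
  have h2ℓ : 1 ≤ 2 * ℓ := by linarith
  have h𝔤 : 0 ≤ 𝔤 := (norm_nonneg _).trans (hnorm i₀)
  have hC : 0 ≤ γ * (2 * ℓ) ^ D := (Nat.cast_nonneg _).trans (hgrowth i₀ _ h2ℓ)
  have hsupp₀ : MatSupportedOn (⋃ c ∈ ({i₀} : Finset Λ), Metric.closedBall c ℓ) (h i₀) := by
    simpa using hsupp i₀
  have key := norm_iterate_commutator_le h h𝔤 hC hnorm
    (fun T V => MatSupportedOn (⋃ c ∈ T, Metric.closedBall c ℓ) V)
    (fun T => T.biUnion fun c => (Metric.closedBall c (2 * ℓ)).toFinset)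
    (card_biUnion_closedBall_le hgrowth h2ℓ)
    (fun T V hV j hj => (hsupp j).commute (disjoint_closedBall_biUnion hj) hV)
    (fun T V j hV => by simpa [Set.biUnion_insert] using (hsupp j).commutator hV)
    m 1 (card_singleton i₀).le hsupp₀
  rw [Nat.one_ascFactorial] at key
  calc opNorm ((adAction (∑ i : Λ, h i))^[m] (h i₀))
      ≤ ‖h i₀‖ * (2 * 𝔤 * (γ * (2 * ℓ) ^ D)) ^ m * m.factorial := key
    _ ≤ 𝔤 * (2 * 𝔤 * (γ * (2 * ℓ) ^ D)) ^ m * m.factorial := by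
        gcongr
        exact hnorm i₀
    _ = 𝔤 * m.factorial * (2 * γ * (2 * ℓ) ^ D * 𝔤) ^ m := by ring

/-- For `H = ∑_i h_{i[ℓ]}` with `h_{i[ℓ]}` supported on the ball `i[ℓ]`
and `‖h_{i[ℓ]}‖ ≤ 𝔤`, the iterated commutators satisfy
`‖ad_H^m(h_{i₀[ℓ]})‖ ≤ 𝔤 · m! · (2γ(2ℓ)^D 𝔤)^m`. -/
theorem iterated_commutator_norm_bound
    {Λ : Type*} [Fintype Λ] [MetricSpace Λ] (d₀ D : ℕ) (γ 𝔤 ℓ : ℝ)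
    (hγ : 1 ≤ γ) (h𝔤 : 0 < 𝔤) (hℓ : 1 ≤ ℓ) (hgrowth : GrowthBound Λ γ D)
    (h : Λ → FullMat Λ d₀)
    (hsupp : ∀ i : Λ, MatSupportedOn (Metric.closedBall i ℓ) (h i))
    (hnorm : ∀ i : Λ, opNorm (h i) ≤ 𝔤)
    (i₀ : Λ) (m : ℕ) :
    opNorm ((adAction (∑ i : Λ, h i))^[m] (h i₀)) ≤
      𝔤 * m.factorial * (2 * γ * (2 * ℓ) ^ D * 𝔤) ^ m :=
  iterated_commutator_norm_bound_general d₀ D γ 𝔤 ℓ hℓ hgrowth h hsupp hnorm i₀ m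

end CMI
end
end

section
/- Let H and V be complex square matrices of the same size, let c > 0, and suppose that the iterated commutators satisfy ‖ad_H^m(V)‖ ≤ ‖V‖ c^m m! for every m ≥ 1, where ad_H(V) := HV − VH. Then for every real x with c|x| < 1, ‖e^{xH} V e^{−xH}‖ ≤ ‖V‖ / (1 − c|x|). -/
/-!
Writing `ad a = L_a - R_a` as the difference of the commuting operators of left and right
multiplication, `exp a * v * exp (-a) = exp (ad a) v = ∑ (ad a)^m v / m!`.
For `a = x • H` the hypothesis bounds the `m`-th term by `‖v‖ (c|x|)^m`, and the geometric
series sums to `‖v‖ / (1 - c|x|)`.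
-/

open scoped Classical ComplexOrder
noncomputable section

namespace CMI

section BanachSpace

open NormedSpace ContinuousLinearMap
open scoped Nat

variable {𝕜 E : Type*} [RCLike 𝕜] [NormedAddCommGroup E] [NormedSpace 𝕜 E]
  [CompleteSpace E]

theorem norm_exp_apply_le_of_norm_pow_apply_le (T : E →L[𝕜] E) (v : E) {r : ℝ}
    (hr₀ : 0 ≤ r) (hr₁ : r < 1) (hT : ∀ m, ‖(T ^ m) v‖ ≤ ‖v‖ * r ^ m * m !) :
    ‖exp T v‖ ≤ ‖v‖ / (1 - r) := by
  have hexp := (exp_series_hasSum_exp' (𝕂 := 𝕜) T).mapL (apply 𝕜 E v)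
  have hgeom := (hasSum_geometric_of_lt_one hr₀ hr₁).mul_left ‖v‖
  refine hexp.norm_le_of_bounded hgeom fun m => ?_
  have hm : (0 : ℝ) < m ! := mod_cast m.factorial_pos
  calc ‖((m !⁻¹ : 𝕜) • T ^ m) v‖ = ‖(T ^ m) v‖ / m ! := by
        simp [norm_smul, div_eq_inv_mul]
    _ ≤ ‖v‖ * r ^ m := by
        rw [div_le_iff₀ hm]
        exact hT m

end BanachSpace

section BanachAlgebra

open NormedSpace ContinuousLinearMap
open scoped Nat

variable {𝕜 : Type*} [RCLike 𝕜] {A : Type*} [NormedRing A] [NormedAlgebra 𝕜 A]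

variable (𝕜) in
def adCLM (a : A) : A →L[𝕜] A := mul 𝕜 A a - (mul 𝕜 A).flip a

theorem adCLM_pow_apply (a v : A) (m : ℕ) :
    (adCLM 𝕜 a ^ m) v = (fun w => a * w - w * a)^[m] v := by
  rw [FunLike.coe_pow_eq_iterate]
  rfl

theorem adCLM_smul (t : 𝕜) (a : A) : adCLM 𝕜 (t • a) = t • adCLM 𝕜 a := by
  simp [adCLM, smul_sub]

variable [CompleteSpace A]

theorem exp_mul_apply (a w : A) : exp (mul 𝕜 A a) w = exp a * w := by
  have hpow (m : ℕ) : (mul 𝕜 A a ^ m) w = a ^ m * w := by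
    rw [FunLike.coe_pow_eq_iterate]
    exact congrFun (mul_left_iterate a m) w
  have hL := (exp_series_hasSum_exp' (𝕂 := 𝕜) (mul 𝕜 A a)).mapL (apply 𝕜 A w)
  simp only [apply_apply, FunLike.coe_smul, Pi.smul_apply, hpow] at hL
  exact hL.unique <| by
    simpa only [smul_mul_assoc] using (exp_series_hasSum_exp' (𝕂 := 𝕜) a).mul_right w

theorem exp_flip_mul_apply (a w : A) : exp ((mul 𝕜 A).flip a) w = w * exp a := by
  have hpow (m : ℕ) : ((mul 𝕜 A).flip a ^ m) w = w * a ^ m := by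
    rw [FunLike.coe_pow_eq_iterate]
    exact congrFun (mul_right_iterate a m) w
  have hR := (exp_series_hasSum_exp' (𝕂 := 𝕜) ((mul 𝕜 A).flip a)).mapL (apply 𝕜 A w)
  simp only [apply_apply, FunLike.coe_smul, Pi.smul_apply, hpow] at hR
  exact hR.unique <| by
    simpa only [mul_smul_comm] using (exp_series_hasSum_exp' (𝕂 := 𝕜) a).mul_left w

theorem exp_mul_mul_exp_neg_eq_exp_adCLM_apply (a v : A) :
    exp a * v * exp (-a) = exp (adCLM 𝕜 a) v := by
  let +nondep : NormedAlgebra ℚ (A →L[𝕜] A) := .restrictScalars ℚ 𝕜 _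
  have hcomm : Commute (mul 𝕜 A a) (-(mul 𝕜 A).flip a) := by
    refine Commute.neg_right (ContinuousLinearMap.ext fun w => ?_)
    simp [mul_assoc]
  rw [adCLM, sub_eq_add_neg, exp_add_of_commute hcomm]
  show _ = exp (mul 𝕜 A a) (exp (-(mul 𝕜 A).flip a) v)
  rw [← map_neg, exp_flip_mul_apply, exp_mul_apply, mul_assoc]

theorem norm_exp_smul_mul_mul_exp_neg_smul_le (a v : A) (t : 𝕜) {c : ℝ} (hc : 0 ≤ c)
    (hct : c * ‖t‖ < 1)
    (had : ∀ m, 1 ≤ m → ‖(fun w => a * w - w * a)^[m] v‖ ≤ ‖v‖ * c ^ m * m !) :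
    ‖exp (t • a) * v * exp (-(t • a))‖ ≤ ‖v‖ / (1 - c * ‖t‖) := by
  rw [exp_mul_mul_exp_neg_eq_exp_adCLM_apply (𝕜 := 𝕜)]
  refine norm_exp_apply_le_of_norm_pow_apply_le _ v (by positivity) hct fun m => ?_
  rcases m.eq_zero_or_pos with rfl | hm
  · simp
  rw [adCLM_smul, smul_pow, smul_apply, adCLM_pow_apply, norm_smul, norm_pow]
  calc ‖t‖ ^ m * ‖(fun w => a * w - w * a)^[m] v‖
      ≤ ‖t‖ ^ m * (‖v‖ * c ^ m * m !) := by
        gcongr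
        exact had m hm
    _ = ‖v‖ * (c * ‖t‖) ^ m * m ! := by ring

end BanachAlgebra

/-- If `‖ad_H^m(V)‖ ≤ ‖V‖ c^m m!` for all `m ≥ 1`, then for `c|x| < 1`,
`‖e^{xH} V e^{-xH}‖ ≤ ‖V‖ / (1 - c|x|)`. -/
theorem conjugated_norm_bound {n : Type*} [Fintype n] [DecidableEq n]
    (H V : Matrix n n ℂ) (c : ℝ) (hc : 0 < c)
    (had : ∀ m : ℕ, 1 ≤ m →
      opNorm ((adAction H)^[m] V) ≤ opNorm V * c ^ m * m.factorial)
    (x : ℝ) (hx : c * |x| < 1) :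
    opNorm (NormedSpace.exp (x • H) * V * NormedSpace.exp ((-x) • H)) ≤
      opNorm V / (1 - c * |x|) := by
  -- `opNorm` is definitionally the norm of the scoped L2-operator-norm instance on matrices.
  open scoped Matrix.Norms.L2Operator in
  have hbound := norm_exp_smul_mul_mul_exp_neg_smul_le H V (x : ℂ) hc.le
    (by rwa [Complex.norm_real, Real.norm_eq_abs]) had
  rw [Complex.norm_real, Real.norm_eq_abs, ← neg_smul, Complex.coe_smul, ← Complex.ofReal_neg,
    Complex.coe_smul] at hbound
  exact hbound

end CMI
end
end

section
/- Let H and V be complex square matrices of the same size and t ≥ 0. Then ‖e^{t(H+V)} e^{−tH}‖ ≤ exp(∫₀^t ‖e^{xH} V e^{−xH}‖ dx), where ‖·‖ is the operator norm. -/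
open scoped Classical ComplexOrder
noncomputable section

namespace CMI

open NormedSpace Set Filter Topology

/-! `f x = exp (x • (H + V)) * exp ((-x) • H)` satisfies `f 0 = 1` and `f' = f * W` with
`W x = exp (x • H) * V * exp ((-x) • H)`, so `‖f'‖ ≤ ‖W‖ * ‖f‖`, and Grönwall's inequality with the
variable rate `‖W x‖` bounds `‖f t‖` by `exp (∫₀ᵗ ‖W‖)`. -/

theorem norm_le_mul_exp_integral_of_norm_deriv_le {E : Type*} [NormedAddCommGroup E]
    [NormedSpace ℝ E] {f f' : ℝ → E} {k : ℝ → ℝ} {t : ℝ} (ht : 0 ≤ t)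
    (hf : ∀ x, HasDerivAt f (f' x) x) (hk : Continuous k)
    (bound : ∀ x ∈ Ico 0 t, ‖f' x‖ ≤ k x * ‖f x‖) :
    ‖f t‖ ≤ ‖f 0‖ * Real.exp (∫ x in (0 : ℝ)..t, k x) := by
  set K : ℝ → ℝ := fun x => ∫ s in (0 : ℝ)..x, k s
  have hK : ∀ x, HasDerivAt K (k x) x := fun x =>
    intervalIntegral.integral_hasDerivAt_right (hk.intervalIntegrable _ _)
      (hk.stronglyMeasurableAtFilter _ _) hk.continuousAt
  -- Comparison with the strict supersolution `(‖f 0‖ + ε) exp (K x + ε x)`, then `ε → 0`.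
  have slack : ∀ ε > (0 : ℝ), ‖f t‖ ≤ (‖f 0‖ + ε) * Real.exp (K t + ε * t) := by
    intro ε hε
    set B : ℝ → ℝ := fun x => (‖f 0‖ + ε) * Real.exp (K x + ε * x)
    have hB_pos : ∀ x, 0 < B x := fun x => by positivity
    have hB : ∀ x, HasDerivAt B (B x * (k x + ε)) x := fun x => by
      refine ((((hK x).add ((hasDerivAt_id x).const_mul ε)).exp).const_mul
        (‖f 0‖ + ε)).congr_deriv ?_
      simp only [B, Pi.add_apply, id, mul_one]
      ring
    refine image_norm_le_of_norm_deriv_right_lt_deriv_boundary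
      (fun x _ => (hf x).continuousAt.continuousWithinAt) (fun x _ => (hf x).hasDerivWithinAt)
      (by simpa [B, K] using hε.le) hB (fun x hx hfx => ?_) (right_mem_Icc.2 ht)
    calc ‖f' x‖ ≤ k x * B x := hfx ▸ bound x hx
      _ < B x * (k x + ε) := by nlinarith [hB_pos x]
  have hlim : Tendsto (fun ε : ℝ => (‖f 0‖ + ε) * Real.exp (K t + ε * t)) (𝓝[>] 0)
      (𝓝 ((‖f 0‖ + 0) * Real.exp (K t + 0 * t))) :=
    (Continuous.tendsto (by fun_prop) 0).mono_left nhdsWithin_le_nhds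
  simpa using ge_of_tendsto hlim (eventually_nhdsWithin_of_forall slack)

section BanachAlgebra

variable {𝔸 : Type*} [NormedRing 𝔸] [NormedAlgebra ℝ 𝔸] [CompleteSpace 𝔸]

theorem exp_neg_smul_mul_exp_smul (a : 𝔸) (x : ℝ) : exp ((-x) • a) * exp (x • a) = 1 := by
  let +nondep : NormedAlgebra ℚ 𝔸 := .restrictScalars ℚ ℝ 𝔸
  rw [← exp_add_of_commute ((Commute.refl a).smul_left (-x) |>.smul_right x), ← add_smul,
    neg_add_cancel, zero_smul, exp_zero]

theorem continuous_exp_smul (a : 𝔸) : Continuous fun x : ℝ => exp (x • a) :=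
  continuous_iff_continuousAt.2 fun x => (hasDerivAt_exp_smul_const a x).continuousAt

theorem hasDerivAt_exp_smul_add_mul_exp_neg_smul (h v : 𝔸) (x : ℝ) :
    HasDerivAt (fun s : ℝ => exp (s • (h + v)) * exp ((-s) • h))
      (exp (x • (h + v)) * exp ((-x) • h) * (exp (x • h) * v * exp ((-x) • h))) x := by
  have hneg : HasDerivAt (fun s : ℝ => exp ((-s) • h)) (-(exp ((-x) • h) * h)) x := by
    simpa [Function.comp_def] using
      (hasDerivAt_exp_smul_const h (-x)).scomp x (hasDerivAt_neg x)
  refine ((hasDerivAt_exp_smul_const (h + v) x).mul hneg).congr_deriv ?_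
  have hcomm : h * exp ((-x) • h) = exp ((-x) • h) * h :=
    ((Commute.refl h).smul_right (-x)).exp_right.eq
  calc exp (x • (h + v)) * (h + v) * exp ((-x) • h) + exp (x • (h + v)) * -(exp ((-x) • h) * h)
      = exp (x • (h + v)) * v * exp ((-x) • h) := by rw [← hcomm]; noncomm_ring
    _ = _ := by
      rw [mul_assoc (exp _) (exp _), ← mul_assoc (exp ((-x) • h)), ← mul_assoc (exp ((-x) • h)),
        exp_neg_smul_mul_exp_smul, one_mul, mul_assoc]

theorem norm_exp_smul_add_mul_exp_neg_smul_le (h v : 𝔸) {t : ℝ} (ht : 0 ≤ t) :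
    ‖exp (t • (h + v)) * exp ((-t) • h)‖ ≤
      ‖(1 : 𝔸)‖ * Real.exp (∫ x in (0 : ℝ)..t, ‖exp (x • h) * v * exp ((-x) • h)‖) := by
  have hconj : Continuous fun x : ℝ => ‖exp (x • h) * v * exp ((-x) • h)‖ :=
    (((continuous_exp_smul h).mul continuous_const).mul
      ((continuous_exp_smul h).comp continuous_neg)).norm
  simpa using norm_le_mul_exp_integral_of_norm_deriv_le ht
    (hasDerivAt_exp_smul_add_mul_exp_neg_smul h v) hconj
    (fun x _ => (norm_mul_le _ _).trans_eq (mul_comm _ _))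

end BanachAlgebra

section L2OpNorm

open scoped Matrix.Norms.L2Operator

variable {n : Type*} [Fintype n] [DecidableEq n]

theorem opNorm_eq_l2_opNorm (A : Matrix n n ℂ) : opNorm A = ‖A‖ := rfl

theorem l2_opNorm_one_le : ‖(1 : Matrix n n ℂ)‖ ≤ 1 := by
  rw [Matrix.cstar_norm_def, map_one]
  exact ContinuousLinearMap.norm_id_le

end L2OpNorm

/-- For complex square matrices `H, V` and `t ≥ 0`,
`‖e^{t(H+V)} e^{-tH}‖ ≤ exp(∫₀^t ‖e^{xH} V e^{-xH}‖ dx)`. -/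
theorem exp_perturbation_norm_bound {n : Type*} [Fintype n] [DecidableEq n]
    (H V : Matrix n n ℂ) (t : ℝ) (ht : 0 ≤ t) :
    opNorm (NormedSpace.exp (t • (H + V)) * NormedSpace.exp ((-t) • H)) ≤
      Real.exp (∫ x in (0 : ℝ)..t,
        opNorm (NormedSpace.exp (x • H) * V * NormedSpace.exp ((-x) • H))) := by
  simp only [opNorm_eq_l2_opNorm]
  open scoped Matrix.Norms.L2Operator in
  exact (norm_exp_smul_add_mul_exp_neg_smul_le H V ht).trans
    (mul_le_of_le_one_left (Real.exp_pos _).le l2_opNorm_one_le)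

end CMI
end
end

section
/- Let 𝒜 be a unital complex Banach algebra (for instance, the algebra of linear endomorphisms of a finite-dimensional normed space), let a, b ∈ 𝒜 and t ≥ 0, and suppose ‖exp(s a)‖ ≤ 1 and ‖exp(s b)‖ ≤ 1 for every s ∈ [0, t]. Then ‖exp(t a) − exp(t b)‖ ≤ t ‖a − b‖. -/
/-! The interpolation `s ↦ exp(s a) exp((t - s) b)` runs from `exp(t b)` to `exp(t a)`, and its
derivative `exp(s a) (a - b) exp((t - s) b)` has norm at most `‖a - b‖` while both semigroups are
contractive; the mean value inequality on `[0, t]` gives the bound. -/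

open NormedSpace

theorem hasDerivAt_exp_smul_mul_exp_sub_smul {𝕂 𝔸 : Type*} [RCLike 𝕂] [NormedRing 𝔸]
    [NormedAlgebra 𝕂 𝔸] [CompleteSpace 𝔸] (a b : 𝔸) (t s : 𝕂) :
    HasDerivAt (fun u : 𝕂 => exp (u • a) * exp ((t - u) • b))
      (exp (s • a) * (a - b) * exp ((t - s) • b)) s := by
  have hb : HasDerivAt (fun u : 𝕂 => exp ((t - u) • b)) (-(exp ((t - s) • b) * b)) s := by
    simpa [Function.comp_def] using
      (hasDerivAt_exp_smul_const b (t - s)).scomp s ((hasDerivAt_id s).const_sub t)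
  convert (hasDerivAt_exp_smul_const a s).mul hb using 1
  · rfl
  rw [((Commute.refl b).smul_left (t - s)).exp_left.eq]
  noncomm_ring

theorem norm_exp_smul_sub_exp_smul_le_of_norm_exp_le_one {𝔸 : Type*} [NormedRing 𝔸]
    [NormedAlgebra ℝ 𝔸] [CompleteSpace 𝔸] {a b : 𝔸} {t : ℝ} (ht : 0 ≤ t)
    (ha : ∀ s ∈ Set.Icc 0 t, ‖exp (s • a)‖ ≤ 1) (hb : ∀ s ∈ Set.Icc 0 t, ‖exp (s • b)‖ ≤ 1) :
    ‖exp (t • a) - exp (t • b)‖ ≤ t * ‖a - b‖ := by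
  have hderiv_le : ∀ s ∈ Set.Icc 0 t, ‖exp (s • a) * (a - b) * exp ((t - s) • b)‖ ≤ ‖a - b‖ := by
    rintro s ⟨hs0, hst⟩
    calc ‖exp (s • a) * (a - b) * exp ((t - s) • b)‖
        ≤ ‖exp (s • a)‖ * ‖a - b‖ * ‖exp ((t - s) • b)‖ := norm_mul₃_le
      _ ≤ 1 * ‖a - b‖ * 1 := by
          gcongr
          exacts [ha s ⟨hs0, hst⟩, hb (t - s) ⟨by linarith, by linarith⟩]
      _ = ‖a - b‖ := by ring
  have hmvt := (convex_Icc 0 t).norm_image_sub_le_of_norm_hasDerivWithin_le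
    (fun s _ => (hasDerivAt_exp_smul_mul_exp_sub_smul a b t s).hasDerivWithinAt) hderiv_le
    (Set.left_mem_Icc.mpr ht) (Set.right_mem_Icc.mpr ht)
  simpa [Real.norm_of_nonneg ht, mul_comm] using hmvt

/-- In a unital complex Banach algebra, if `‖exp(s a)‖ ≤ 1` and
`‖exp(s b)‖ ≤ 1` for all `s ∈ [0, t]`, then `‖exp(t a) - exp(t b)‖ ≤ t ‖a - b‖`. -/
theorem exp_sub_exp_norm_le_of_contractive {𝒜 : Type*} [NormedRing 𝒜]
    [NormedAlgebra ℂ 𝒜] [CompleteSpace 𝒜] (a b : 𝒜) (t : ℝ) (ht : 0 ≤ t)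
    (ha : ∀ s : ℝ, 0 ≤ s → s ≤ t → ‖NormedSpace.exp ((s : ℂ) • a)‖ ≤ 1)
    (hb : ∀ s : ℝ, 0 ≤ s → s ≤ t → ‖NormedSpace.exp ((s : ℂ) • b)‖ ≤ 1) :
    ‖NormedSpace.exp ((t : ℂ) • a) - NormedSpace.exp ((t : ℂ) • b)‖ ≤ t * ‖a - b‖ := by
  simp only [Complex.coe_smul] at ha hb ⊢
  exact norm_exp_smul_sub_exp_smul_le_of_norm_exp_le_one ht
    (fun s hs => ha s hs.1 hs.2) (fun s hs => hb s hs.1 hs.2)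
end

section
/- Let H = H_1 ⊗ H_2 ⊗ ⋯ ⊗ H_k be a tensor product of finite-dimensional complex Hilbert spaces, let T ⊆ {1, …, k}, and for an operator A on H define the normalized partial trace 𝑡𝑟̃_T(A) := (⊗_{i∈T} 1_{H_i}/dim H_i) ⊗ tr_T(A), where tr_T is the partial trace over the factors in T. Then for every operator A on H, ‖𝑡𝑟̃_T(A) − A‖ ≤ ∑_{i∈T} sup{‖[A, u]‖ : u a unitary on H supported on the i-th factor}, where ‖·‖ is the operator norm and an operator is supported on the i-th factor if it acts as the identity on all other factors. -/
open scoped Classical ComplexOrder Matrix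
noncomputable section

namespace CMI

variable {k : ℕ} {d : Fin k → ℕ}

/-- Override the values of a configuration on `T` by a partial configuration. -/
def ovr (T : Finset (Fin k)) (x : (i : Fin k) → Fin (d i))
    (z : (i : {j // j ∈ T}) → Fin (d i)) : (i : Fin k) → Fin (d i) :=
  fun i => if h : i ∈ T then z ⟨i, h⟩ else x i

/-- The normalized partial trace `𝑡𝑟̃_T(A) = (⊗_{i∈T} 1/dim H_i) ⊗ tr_T(A)`. -/
def ntrace (T : Finset (Fin k))
    (A : Matrix ((i : Fin k) → Fin (d i)) ((i : Fin k) → Fin (d i)) ℂ) :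
    Matrix ((i : Fin k) → Fin (d i)) ((i : Fin k) → Fin (d i)) ℂ :=
  fun x y =>
    if ∀ i ∈ T, x i = y i then
      ((∏ i ∈ T, (d i : ℂ)))⁻¹ *
        ∑ z : (i : {j // j ∈ T}) → Fin (d i), A (ovr T x z) (ovr T y z)
    else 0

/-- An operator is supported on the `i`-th tensor factor. -/
def FactorSupported (i : Fin k)
    (u : Matrix ((j : Fin k) → Fin (d j)) ((j : Fin k) → Fin (d j)) ℂ) : Prop :=
  ∃ f : Matrix (Fin (d i)) (Fin (d i)) ℂ, ∀ x y,
    u x y = if ∀ j, j ≠ i → x j = y j then f (x i) (y i) else 0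

/-!
On one factor, the cyclic shifts times the diagonal sign matrices form a unitary 1-design:
averaging `w M w*` over them gives `(tr M / d) • 1`. Hence the normalized partial trace over a
single factor `i` is an average of conjugations `u B u*` by unitaries supported on `i`, so it is a
contraction and `‖𝑡𝑟̃_{i} B - B‖ ≤ max_u ‖u B u* - B‖ = max_u ‖[B, u]‖`.
Since `𝑡𝑟̃_{insert i T} = 𝑡𝑟̃_{i} ∘ 𝑡𝑟̃_T` and `𝑡𝑟̃_T` commutes with operators on a factor `i ∉ T`,
`‖[𝑡𝑟̃_T A, u]‖ = ‖𝑡𝑟̃_T [A, u]‖ ≤ ‖[A, u]‖`, and the bound follows by induction on `T`.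
-/

open scoped Matrix.Norms.L2Operator
open Finset Function Matrix

lemma opNorm_eq_norm {n : Type*} [Fintype n] [DecidableEq n] (A : Matrix n n ℂ) :
    opNorm A = ‖A‖ :=
  rfl

lemma norm_average_le {𝕜 E ι : Type*} [RCLike 𝕜] [SeminormedAddCommGroup E] [NormedSpace 𝕜 E]
    [Fintype ι] [Nonempty ι] {x : ι → E} {r : ℝ} (hx : ∀ p, ‖x p‖ ≤ r) :
    ‖(Fintype.card ι : 𝕜)⁻¹ • ∑ p, x p‖ ≤ r := by
  have hcard : (0 : ℝ) < Fintype.card ι := by exact_mod_cast Fintype.card_pos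
  calc ‖(Fintype.card ι : 𝕜)⁻¹ • ∑ p, x p‖ ≤ (Fintype.card ι : ℝ)⁻¹ * ∑ _p : ι, r := by
        rw [norm_smul, norm_inv, RCLike.norm_natCast]
        gcongr
        exact norm_sum_le_of_le _ fun p _ => hx p
    _ = r := by rw [sum_const, card_univ, nsmul_eq_mul, inv_mul_cancel_left₀ hcard.ne']

section Twirl

variable (𝕜 : Type*) [RCLike 𝕜] {E : Type*} [NormedRing E] [StarRing E] [CStarRing E]
  [NormedAlgebra 𝕜 E] {ι : Type*} [Fintype ι]

def twirl (u : ι → E) (B : E) : E :=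
  (Fintype.card ι : 𝕜)⁻¹ • ∑ p, u p * B * star (u p)

variable {𝕜}

lemma norm_mul_sub_mul_le_of_mem_unitary (A : E) {u : E} (hu : u ∈ unitary E) :
    ‖A * u - u * A‖ ≤ 2 * ‖A‖ := by
  calc ‖A * u - u * A‖ ≤ ‖A * u‖ + ‖u * A‖ := norm_sub_le _ _
    _ = 2 * ‖A‖ := by
      rw [CStarRing.norm_mul_mem_unitary _ hu, CStarRing.norm_mem_unitary_mul _ hu]; ring

variable [Nonempty ι] {u : ι → E}

lemma norm_twirl_le (hu : ∀ p, u p ∈ unitary E) (B : E) : ‖twirl 𝕜 u B‖ ≤ ‖B‖ :=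
  norm_average_le fun p => by
    rw [CStarRing.norm_mul_mem_unitary _ (Unitary.star_mem (hu p)),
      CStarRing.norm_mem_unitary_mul _ (hu p)]

lemma norm_twirl_sub_le (hu : ∀ p, u p ∈ unitary E) {B : E} {r : ℝ}
    (hB : ∀ p, ‖B * u p - u p * B‖ ≤ r) : ‖twirl 𝕜 u B - B‖ ≤ r := by
  have hcard : (Fintype.card ι : 𝕜) ≠ 0 := Nat.cast_ne_zero.mpr Fintype.card_ne_zero
  have hsub : twirl 𝕜 u B - B =
      (Fintype.card ι : 𝕜)⁻¹ • ∑ p, (u p * B * star (u p) - B) := by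
    rw [twirl, sum_sub_distrib, smul_sub, sum_const, card_univ, ← Nat.cast_smul_eq_nsmul 𝕜,
      smul_smul, inv_mul_cancel₀ hcard, one_smul]
  rw [hsub]
  refine norm_average_le fun p => ?_
  calc ‖u p * B * star (u p) - B‖ = ‖(u p * B - B * u p) * star (u p)‖ := by
        rw [sub_mul, mul_assoc B, Unitary.mul_star_self_of_mem (hu p), mul_one]
    _ = ‖B * u p - u p * B‖ := by
        rw [CStarRing.norm_mul_mem_unitary _ (Unitary.star_mem (hu p)), norm_sub_rev]
    _ ≤ r := hB p

end Twirl

lemma permMatrix_mem_unitary {n 𝕜 : Type*} [Fintype n] [DecidableEq n]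
    [CommRing 𝕜] [StarRing 𝕜] (σ : Equiv.Perm n) :
    σ.permMatrix 𝕜 ∈ unitary (Matrix n n 𝕜) := by
  rw [← unitaryGroup, mem_unitaryGroup_iff, star_eq_conjTranspose, conjTranspose_permMatrix,
    ← permMatrix_mul, inv_mul_cancel, permMatrix_one]

lemma sum_units_mul_units {n : Type*} [Fintype n] [DecidableEq n] (r r' : n) :
    ∑ σ : n → ℤˣ, ((σ r * σ r' : ℤˣ) : ℤ) = if r = r' then 2 ^ Fintype.card n else 0 := by
  split_ifs with h
  · simp [h, Int.units_mul_self, Fintype.card_units_int]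
  · -- multiplying `σ` by the sign flip at `r` negates every term
    have hneg : ∑ σ : n → ℤˣ, ((σ r * σ r' : ℤˣ) : ℤ) =
        -∑ σ : n → ℤˣ, ((σ r * σ r' : ℤˣ) : ℤ) := by
      conv_lhs => rw [← Equiv.sum_comp (Equiv.mulLeft (update (1 : n → ℤˣ) r (-1)))]
      rw [← sum_neg_distrib]
      refine sum_congr rfl fun σ _ => ?_
      simp [update_of_ne (Ne.symm h)]
    omega

section Weyl

variable {n : Type*} [Fintype n] [DecidableEq n]

def signMatrix (σ : n → ℤˣ) : Matrix n n ℂ := diagonal fun r => ((σ r : ℤ) : ℂ)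

lemma signMatrix_mem_unitary (σ : n → ℤˣ) : signMatrix σ ∈ unitary (Matrix n n ℂ) := by
  rw [← unitaryGroup, mem_unitaryGroup_iff, signMatrix, star_eq_conjTranspose,
    diagonal_conjTranspose, diagonal_mul_diagonal, ← diagonal_one]
  congr 1
  funext r
  simp [← Int.cast_mul, ← Units.val_mul, Int.units_mul_self]

lemma sum_signMatrix_conj (M : Matrix n n ℂ) :
    ∑ σ : n → ℤˣ, signMatrix σ * M * (signMatrix σ)ᴴ =
      (2 ^ Fintype.card n : ℂ) • diagonal M.diag := by
  ext r r'
  have hsign : ∑ σ : n → ℤˣ, ((σ r : ℤ) : ℂ) * ((σ r' : ℤ) : ℂ) =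
      if r = r' then 2 ^ Fintype.card n else 0 := by
    exact_mod_cast sum_units_mul_units r r'
  simp only [signMatrix, diagonal_conjTranspose, Matrix.sum_apply, diagonal_mul, mul_diagonal,
    Matrix.smul_apply, diagonal_apply, Pi.star_apply, star_intCast]
  calc ∑ σ : n → ℤˣ, ((σ r : ℤ) : ℂ) * M r r' * ((σ r' : ℤ) : ℂ)
      = M r r' * ∑ σ : n → ℤˣ, ((σ r : ℤ) : ℂ) * ((σ r' : ℤ) : ℂ) := by
        rw [mul_sum]; exact sum_congr rfl fun σ _ => by ring
    _ = _ := by rw [hsign]; split_ifs with h <;> simp [h, mul_comm]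

variable {m : ℕ} [NeZero m]

def shiftMatrix (a : Fin m) : Matrix (Fin m) (Fin m) ℂ := (Equiv.addRight a).permMatrix ℂ

lemma shiftMatrix_conj_diagonal (a : Fin m) (v : Fin m → ℂ) :
    shiftMatrix a * diagonal v * (shiftMatrix a)ᴴ = diagonal (v ∘ (· + a)) := by
  rw [shiftMatrix, conjTranspose_permMatrix, Equiv.Perm.permMatrix, Equiv.Perm.permMatrix,
    PEquiv.toMatrix_toPEquiv_mul, PEquiv.mul_toMatrix_toPEquiv, submatrix_submatrix]
  exact submatrix_diagonal_equiv v (Equiv.addRight a)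

lemma sum_shiftMatrix_conj_diagonal (v : Fin m → ℂ) :
    ∑ a, shiftMatrix a * diagonal v * (shiftMatrix a)ᴴ = (∑ t, v t) • 1 := by
  ext t t'
  simp only [shiftMatrix_conj_diagonal, Matrix.sum_apply, diagonal_apply, Matrix.smul_apply,
    one_apply, Function.comp_apply]
  split_ifs
  · rw [smul_eq_mul, mul_one]
    exact Equiv.sum_comp (Equiv.addLeft t) v
  · simp

def weyl (p : Fin m × (Fin m → ℤˣ)) : Matrix (Fin m) (Fin m) ℂ :=
  shiftMatrix p.1 * signMatrix p.2

lemma weyl_mem_unitary (p : Fin m × (Fin m → ℤˣ)) : weyl p ∈ unitary (Matrix (Fin m) (Fin m) ℂ) :=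
  mul_mem (permMatrix_mem_unitary _) (signMatrix_mem_unitary _)

lemma sum_weyl_conj (M : Matrix (Fin m) (Fin m) ℂ) :
    ∑ p, weyl p * M * (weyl p)ᴴ = ((2 : ℂ) ^ m * M.trace) • 1 := by
  calc ∑ p, weyl p * M * (weyl p)ᴴ
      = ∑ a, shiftMatrix a * (∑ σ : Fin m → ℤˣ, signMatrix σ * M * (signMatrix σ)ᴴ) *
          (shiftMatrix a)ᴴ := by
        rw [Fintype.sum_prod_type]
        refine sum_congr rfl fun a _ => ?_
        simp only [weyl, conjTranspose_mul, mul_sum, sum_mul, mul_assoc]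
    _ = ((2 : ℂ) ^ m * M.trace) • 1 := by
        simp only [sum_signMatrix_conj, mul_smul_comm, smul_mul_assoc, ← smul_sum,
          sum_shiftMatrix_conj_diagonal, smul_smul, Fintype.card_fin]
        rfl

end Weyl

lemma sum_eq_sum_update {ι : Type*} [Fintype ι] [DecidableEq ι] {β : ι → Type*}
    [∀ i, Fintype (β i)] {M : Type*} [AddCommMonoid M]
    (x : (i : ι) → β i) (i : ι) (F : ((i : ι) → β i) → M)
    (hF : ∀ w, ¬(∀ j, j ≠ i → x j = w j) → F w = 0) :
    ∑ w, F w = ∑ t, F (update x i t) := by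
  rw [← sum_image fun s _ t _ hst => update_injective x i hst]
  refine (sum_subset (subset_univ _) fun w _ hw => hF w fun hxw => hw ?_).symm
  refine mem_image.mpr ⟨w i, mem_univ _, funext fun j => ?_⟩
  by_cases hj : j = i
  · subst hj; simp
  · simp [hj, hxw j hj]

abbrev TensorIdx (d : Fin k → ℕ) := (i : Fin k) → Fin (d i)

abbrev TensorMat (d : Fin k → ℕ) := Matrix (TensorIdx d) (TensorIdx d) ℂ

section OnFactor

def onFactor (i : Fin k) (f : Matrix (Fin (d i)) (Fin (d i)) ℂ) : TensorMat d :=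
  fun x y => if ∀ j, j ≠ i → x j = y j then f (x i) (y i) else 0

variable (i : Fin k)

lemma factorSupported_onFactor (f : Matrix (Fin (d i)) (Fin (d i)) ℂ) :
    FactorSupported i (onFactor i f) :=
  ⟨f, fun _ _ => rfl⟩

lemma onFactor_mul_apply (f : Matrix (Fin (d i)) (Fin (d i)) ℂ) (B : TensorMat d)
    (x y : TensorIdx d) :
    (onFactor i f * B) x y = ∑ t, f (x i) t * B (update x i t) y := by
  rw [mul_apply, sum_eq_sum_update x i _ fun w hw => by rw [onFactor, if_neg hw, zero_mul]]
  refine sum_congr rfl fun t _ => ?_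
  rw [onFactor, if_pos fun j hj => (update_of_ne (β := fun j => Fin (d j)) hj t x).symm,
    update_self]

lemma mul_onFactor_apply (f : Matrix (Fin (d i)) (Fin (d i)) ℂ) (B : TensorMat d)
    (x y : TensorIdx d) :
    (B * onFactor i f) x y = ∑ t, B x (update y i t) * f t (y i) := by
  rw [mul_apply, sum_eq_sum_update y i _ fun w hw => by
    rw [onFactor, if_neg fun h => hw fun j hj => (h j hj).symm, mul_zero]]
  refine sum_congr rfl fun t _ => ?_
  rw [onFactor, if_pos fun j hj => update_of_ne (β := fun j => Fin (d j)) hj t y, update_self]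

lemma onFactor_one : onFactor (d := d) i 1 = 1 := by
  ext x y
  by_cases hxy : x = y
  · subst hxy
    simp [onFactor]
  · have : ¬((∀ j, j ≠ i → x j = y j) ∧ x i = y i) := fun h =>
      hxy (funext fun j => if hj : j = i then hj ▸ h.2 else h.1 j hj)
    rw [onFactor, one_apply_ne hxy, one_apply, ← ite_and, if_neg this]

lemma onFactor_conjTranspose (f : Matrix (Fin (d i)) (Fin (d i)) ℂ) :
    (onFactor i f)ᴴ = onFactor i fᴴ := by
  ext x y
  have hsymm : (∀ j, j ≠ i → y j = x j) ↔ ∀ j, j ≠ i → x j = y j :=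
    forall₂_congr fun _ _ => eq_comm
  simp only [conjTranspose_apply, onFactor, hsymm]
  split_ifs <;> simp

lemma onFactor_mul (f g : Matrix (Fin (d i)) (Fin (d i)) ℂ) :
    onFactor (d := d) i f * onFactor i g = onFactor i (f * g) := by
  ext x y
  rw [onFactor_mul_apply, onFactor, mul_apply]
  have hupd : ∀ t, (∀ j, j ≠ i → update x i t j = y j) ↔ ∀ j, j ≠ i → x j = y j :=
    fun t => forall₂_congr fun j hj => by rw [update_of_ne hj]
  split_ifs with h
  · exact sum_congr rfl fun t _ => by rw [onFactor, if_pos ((hupd t).mpr h), update_self]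
  · exact sum_eq_zero fun t _ => by rw [onFactor, if_neg (mt (hupd t).mp h), mul_zero]

lemma onFactor_mem_unitary {f : Matrix (Fin (d i)) (Fin (d i)) ℂ}
    (hf : f ∈ unitary (Matrix (Fin (d i)) (Fin (d i)) ℂ)) :
    onFactor i f ∈ unitary (TensorMat d) := by
  rw [← unitaryGroup, mem_unitaryGroup_iff, star_eq_conjTranspose, onFactor_conjTranspose,
    onFactor_mul, ← star_eq_conjTranspose, Unitary.mul_star_self_of_mem hf, onFactor_one]

def factorSlice (B : TensorMat d) (x y : TensorIdx d) : Matrix (Fin (d i)) (Fin (d i)) ℂ :=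
  fun s t => B (update x i s) (update y i t)

lemma onFactor_conj_apply (f : Matrix (Fin (d i)) (Fin (d i)) ℂ) (B : TensorMat d)
    (x y : TensorIdx d) :
    (onFactor i f * B * (onFactor i f)ᴴ) x y = (f * factorSlice i B x y * fᴴ) (x i) (y i) := by
  rw [onFactor_conjTranspose, mul_onFactor_apply, mul_apply]
  refine sum_congr rfl fun t _ => ?_
  rw [onFactor_mul_apply, mul_apply]
  rfl

end OnFactor

section NTrace

variable {T : Finset (Fin k)} {i : Fin k}

lemma ntrace_empty (A : TensorMat d) : ntrace ∅ A = A := by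
  ext x y
  have hovr : ∀ (w : TensorIdx d) (z : (j : {j // j ∈ (∅ : Finset (Fin k))}) → Fin (d j)),
      ovr ∅ w z = w := fun w z => funext fun j => dif_neg (notMem_empty j)
  simp [ntrace, hovr]

lemma ovr_insert (h : i ∉ T) (w : TensorIdx d)
    (z : (j : {j // j ∈ insert i T}) → Fin (d j)) :
    ovr (insert i T) w z =
      ovr T (update w i (z ⟨i, mem_insert_self i T⟩)) fun j => z ⟨j, mem_insert_of_mem j.2⟩ := by
  funext j
  by_cases hjT : j ∈ T
  · simp [ovr, hjT]
  · by_cases hji : j = i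
    · subst hji
      simp [ovr, hjT]
    · simp [ovr, hjT, hji]

lemma ovr_update (h : i ∉ T) (x : TensorIdx d) (z : (j : {j // j ∈ T}) → Fin (d j))
    (t : Fin (d i)) : update (ovr T x z) i t = ovr T (update x i t) z := by
  funext j
  by_cases hji : j = i
  · subst hji
    simp [ovr, h]
  · by_cases hjT : j ∈ T <;> simp [ovr, hji, hjT]

lemma ovr_apply_of_notMem (h : i ∉ T) (x : TensorIdx d) (z : (j : {j // j ∈ T}) → Fin (d j)) :
    ovr T x z i = x i :=
  dif_neg h

lemma sum_ovr_insert (h : i ∉ T) (A : TensorMat d) (x y : TensorIdx d) :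
    ∑ z : (j : {j // j ∈ insert i T}) → Fin (d j),
        A (ovr (insert i T) x z) (ovr (insert i T) y z)
      = ∑ t : Fin (d i), ∑ z : (j : {j // j ∈ T}) → Fin (d j),
          A (ovr T (update x i t) z) (ovr T (update y i t) z) := by
  rw [← Fintype.sum_prod_type (f := fun p : Fin (d i) × ((j : {j // j ∈ T}) → Fin (d j)) =>
    A (ovr T (update x i p.1) p.2) (ovr T (update y i p.1) p.2))]
  refine Fintype.sum_bijective
    (fun z : (j : {j // j ∈ insert i T}) → Fin (d j) =>
      ((z ⟨i, mem_insert_self i T⟩, fun j => z ⟨j, mem_insert_of_mem j.2⟩) :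
        Fin (d i) × ((j : {j // j ∈ T}) → Fin (d j))))
    ⟨fun z₁ z₂ he => ?_, fun ⟨t, z⟩ => ?_⟩ _ _ fun z => by rw [ovr_insert h, ovr_insert h]
  · funext ⟨j, hj⟩
    rcases mem_insert.mp hj with rfl | hjT
    · exact congrArg Prod.fst he
    · exact congrFun (congrArg Prod.snd he) ⟨j, hjT⟩
  · refine ⟨fun j => if hj : (j : Fin k) ∈ T then z ⟨j, hj⟩
      else Fin.cast (congrArg d ((mem_insert.mp j.2).resolve_right hj).symm) t, ?_⟩
    ext j
    · simp [h]
    · simp [j.2]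

lemma ntrace_insert_apply (h : i ∉ T) (A : TensorMat d) (x y : TensorIdx d) :
    ntrace (insert i T) A x y =
      if x i = y i then (d i : ℂ)⁻¹ * ∑ t, ntrace T A (update x i t) (update y i t) else 0 := by
  have hupd : ∀ t : Fin (d i), (∀ j ∈ T, update x i t j = update y i t j) ↔ ∀ j ∈ T, x j = y j :=
    fun t => forall₂_congr fun j hj => by
      rw [update_of_ne (ne_of_mem_of_not_mem hj h), update_of_ne (ne_of_mem_of_not_mem hj h)]
  simp only [ntrace, hupd, forall_mem_insert, prod_insert h, sum_ovr_insert h]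
  by_cases hT : ∀ j ∈ T, x j = y j
  · simp only [and_iff_left hT, if_pos hT, mul_inv, mul_assoc, ← mul_sum]
  · simp [hT]

lemma ntrace_singleton_apply (B : TensorMat d) (x y : TensorIdx d) :
    ntrace {i} B x y = if x i = y i then (d i : ℂ)⁻¹ * (factorSlice i B x y).trace else 0 := by
  rw [← insert_empty, ntrace_insert_apply (notMem_empty i), ntrace_empty]
  rfl

lemma ntrace_insert (h : i ∉ T) (A : TensorMat d) :
    ntrace (insert i T) A = ntrace {i} (ntrace T A) := by
  ext x y
  rw [ntrace_insert_apply h, ntrace_singleton_apply]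
  rfl

lemma ntrace_singleton_eq_twirl [NeZero (d i)] (B : TensorMat d) :
    ntrace {i} B = twirl ℂ (fun p => onFactor i (weyl p)) B := by
  ext x y
  have hcard : (Fintype.card (Fin (d i) × (Fin (d i) → ℤˣ)) : ℂ) = d i * 2 ^ d i := by
    simp [Fintype.card_units_int]
  have hsum : (∑ p, onFactor i (weyl p) * B * star (onFactor i (weyl p)) : TensorMat d) x y =
      (2 : ℂ) ^ d i * (factorSlice i B x y).trace *
        (1 : Matrix (Fin (d i)) (Fin (d i)) ℂ) (x i) (y i) := by
    rw [Matrix.sum_apply]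
    simp only [star_eq_conjTranspose, onFactor_conj_apply]
    rw [← Matrix.sum_apply, sum_weyl_conj, Matrix.smul_apply, smul_eq_mul]
  rw [twirl, Matrix.smul_apply, smul_eq_mul, hsum, hcard, ntrace_singleton_apply, one_apply]
  split_ifs
  · field_simp
  · simp

lemma ntrace_sub (A B : TensorMat d) : ntrace T (A - B) = ntrace T A - ntrace T B := by
  ext x y
  rw [Matrix.sub_apply]
  unfold ntrace
  split_ifs <;> simp [sum_sub_distrib, mul_sub]

lemma ntrace_conjTranspose (A : TensorMat d) : ntrace T Aᴴ = (ntrace T A)ᴴ := by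
  ext x y
  have hsymm : (∀ j ∈ T, y j = x j) ↔ ∀ j ∈ T, x j = y j := forall₂_congr fun _ _ => eq_comm
  simp only [ntrace, conjTranspose_apply, hsymm]
  split_ifs <;> simp [star_sum]

lemma ntrace_mul_onFactor (h : i ∉ T) (A : TensorMat d) (f : Matrix (Fin (d i)) (Fin (d i)) ℂ) :
    ntrace T (A * onFactor i f) = ntrace T A * onFactor i f := by
  ext x y
  have hupd : ∀ t, (∀ j ∈ T, x j = update y i t j) ↔ ∀ j ∈ T, x j = y j :=
    fun t => forall₂_congr fun j hj => by rw [update_of_ne (ne_of_mem_of_not_mem hj h)]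
  simp only [ntrace, hupd, mul_onFactor_apply, ← ovr_update h, ovr_apply_of_notMem h]
  split_ifs
  · simp only [mul_sum, sum_mul, mul_assoc]
    exact sum_comm
  · simp

lemma ntrace_onFactor_mul (h : i ∉ T) (A : TensorMat d) (f : Matrix (Fin (d i)) (Fin (d i)) ℂ) :
    ntrace T (onFactor i f * A) = onFactor i f * ntrace T A := by
  rw [← conjTranspose_conjTranspose (ntrace T (onFactor i f * A)), ← ntrace_conjTranspose,
    conjTranspose_mul, onFactor_conjTranspose, ntrace_mul_onFactor h, ntrace_conjTranspose,
    conjTranspose_mul, conjTranspose_conjTranspose, onFactor_conjTranspose,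
    conjTranspose_conjTranspose]

end NTrace

section NeZero

variable [∀ i, NeZero (d i)]

lemma norm_ntrace_le (T : Finset (Fin k)) (A : TensorMat d) : ‖ntrace T A‖ ≤ ‖A‖ := by
  induction T using Finset.induction_on with
  | empty => rw [ntrace_empty]
  | insert i T h ih =>
    rw [ntrace_insert h, ntrace_singleton_eq_twirl]
    exact (norm_twirl_le (fun p => onFactor_mem_unitary i (weyl_mem_unitary p)) _).trans ih

lemma norm_ntrace_sub_le (T : Finset (Fin k)) (A : TensorMat d) {c : Fin k → ℝ}
    (hc : ∀ i ∈ T, ∀ u ∈ unitary (TensorMat d), FactorSupported i u → ‖A * u - u * A‖ ≤ c i) :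
    ‖ntrace T A - A‖ ≤ ∑ i ∈ T, c i := by
  induction T using Finset.induction_on with
  | empty => simp [ntrace_empty]
  | insert i T h ih =>
    have hweyl : ∀ p, onFactor i (weyl p) ∈ unitary (TensorMat d) :=
      fun p => onFactor_mem_unitary i (weyl_mem_unitary p)
    have hstep : ‖ntrace {i} (ntrace T A) - ntrace T A‖ ≤ c i := by
      rw [ntrace_singleton_eq_twirl]
      refine norm_twirl_sub_le hweyl fun p => ?_
      rw [← ntrace_mul_onFactor h, ← ntrace_onFactor_mul h, ← ntrace_sub]
      exact (norm_ntrace_le T _).trans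
        (hc i (mem_insert_self i T) _ (hweyl p) (factorSupported_onFactor i _))
    calc ‖ntrace (insert i T) A - A‖
        = ‖(ntrace {i} (ntrace T A) - ntrace T A) + (ntrace T A - A)‖ := by
          rw [ntrace_insert h, sub_add_sub_cancel]
      _ ≤ c i + ∑ j ∈ T, c j := (norm_add_le _ _).trans
          (add_le_add hstep (ih fun j hj => hc j (mem_insert_of_mem hj)))
      _ = ∑ j ∈ insert i T, c j := (sum_insert h).symm

end NeZero

/-- The normalized partial trace satisfies
`‖𝑡𝑟̃_T(A) - A‖ ≤ ∑_{i∈T} sup{‖[A,u]‖ : u unitary supported on the i-th factor}`. -/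
theorem ntrace_sub_le_sum_commutators (T : Finset (Fin k))
    (A : Matrix ((i : Fin k) → Fin (d i)) ((i : Fin k) → Fin (d i)) ℂ) :
    opNorm (ntrace T A - A) ≤
      ∑ i ∈ T, sSup {c : ℝ |
        ∃ u : Matrix ((j : Fin k) → Fin (d j)) ((j : Fin k) → Fin (d j)) ℂ,
          u * uᴴ = 1 ∧ uᴴ * u = 1 ∧ FactorSupported i u ∧
            c = opNorm (A * u - u * A)} := by
  simp only [opNorm_eq_norm]
  rcases isEmpty_or_nonempty (TensorIdx d) with hempty | ⟨⟨x⟩⟩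
  · have hzero : ntrace T A - A = 0 := Matrix.ext fun y => isEmptyElim y
    rw [hzero, norm_zero]
    exact sum_nonneg fun i _ => Real.sSup_nonneg fun _ ⟨_, _, _, _, hc⟩ => hc ▸ norm_nonneg _
  · have : ∀ i, NeZero (d i) := fun i => ⟨(x i).pos.ne'⟩
    refine norm_ntrace_sub_le T A fun i _ u hu hsupp => le_csSup ⟨2 * ‖A‖, ?_⟩
      ⟨u, Unitary.mul_star_self_of_mem hu, Unitary.star_mul_self_of_mem hu, hsupp, rfl⟩
    rintro _ ⟨v, hv, -, -, rfl⟩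
    exact norm_mul_sub_mul_le_of_mem_unitary A (mem_unitaryGroup_iff.mpr hv)

end CMI
end
end

section
/- Let H and V be complex square matrices of the same size. Then the map s ↦ exp(H + sV) from ℝ to matrices is differentiable at s = 0, with derivative ∫₀¹ e^{xH} V e^{(1−x)H} dx. -/
/-!
Duhamel's formula: `t ↦ exp (t • A) * exp ((1 - t) • B)` interpolates between `exp B` and
`exp A` and has derivative `exp (t • A) * (A - B) * exp ((1 - t) • B)`, so
`exp A - exp B = ∫₀¹ exp (x • A) * (A - B) * exp ((1 - x) • B) dx`.
With `A = H + s • V` and `B = H` this writes `exp (H + s • V) - exp H` as `s` times an integral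
depending continuously on `s`, whose value at `s = 0` is therefore the derivative.
-/

namespace CMI

open NormedSpace

theorem hasDerivAt_of_sub_eq_smul {𝕜 F : Type*} [NontriviallyNormedField 𝕜]
    [NormedAddCommGroup F] [NormedSpace 𝕜 F] {f g : 𝕜 → F} {a : 𝕜} (hg : ContinuousAt g a)
    (hfg : ∀ s, f s - f a = (s - a) • g s) : HasDerivAt f (g a) a := by
  rw [hasDerivAt_iff_tendsto_slope]
  refine (hg.tendsto.mono_left nhdsWithin_le_nhds).congr' ?_
  filter_upwards [self_mem_nhdsWithin] with s hs
  rw [slope_def_module, hfg, inv_smul_smul₀ (sub_ne_zero.2 hs)]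

theorem hasDerivAt_exp_smul_mul_exp_one_sub_smul {𝔸 : Type*} [NormedRing 𝔸] [NormedAlgebra ℝ 𝔸]
    [CompleteSpace 𝔸] (A B : 𝔸) (t : ℝ) :
    HasDerivAt (fun t : ℝ => exp (t • A) * exp ((1 - t) • B))
      (exp (t • A) * (A - B) * exp ((1 - t) • B)) t := by
  have hB : HasDerivAt (fun t : ℝ => exp ((1 - t) • B)) (-(B * exp ((1 - t) • B))) t := by
    simpa [Function.comp_def] using
      (hasDerivAt_exp_smul_const' B (1 - t)).scomp t ((hasDerivAt_id t).const_sub 1)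
  refine ((hasDerivAt_exp_smul_const A t).mul hB).congr_deriv ?_
  noncomm_ring

/- The operator norm makes matrices a Banach algebra; derivatives and continuity only see the
topology, so these facts also hold for the entrywise norm used below. -/
section LinftyOpNorm

open scoped Matrix.Norms.Operator

variable {m 𝕜 : Type*} [Fintype m] [DecidableEq m] [RCLike 𝕜]

theorem Matrix.hasDerivAt_exp_smul_mul_exp_one_sub_smul (A B : Matrix m m 𝕜) (t : ℝ) :
    HasDerivAt (fun t : ℝ => exp (t • A) * exp ((1 - t) • B))
      (exp (t • A) * (A - B) * exp ((1 - t) • B)) t :=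
  CMI.hasDerivAt_exp_smul_mul_exp_one_sub_smul A B t

@[fun_prop]
theorem Matrix.continuous_exp : Continuous (exp : Matrix m m 𝕜 → Matrix m m 𝕜) :=
  exp_continuous

end LinftyOpNorm

attribute [local instance] Matrix.normedAddCommGroup Matrix.normedSpace

theorem Matrix.exp_sub_exp_eq_integral {m 𝕜 : Type*} [Fintype m] [DecidableEq m] [RCLike 𝕜]
    (A B : Matrix m m 𝕜) :
    exp A - exp B = ∫ x in (0 : ℝ)..1, exp (x • A) * (A - B) * exp ((1 - x) • B) := by
  rw [intervalIntegral.integral_eq_sub_of_hasDerivAt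
    (fun x _ => Matrix.hasDerivAt_exp_smul_mul_exp_one_sub_smul A B x)
    (Continuous.intervalIntegrable (by fun_prop) 0 1)]
  simp

/-- The map `s ↦ exp(H + sV)` is differentiable at `s = 0` with
derivative `∫₀¹ e^{xH} V e^{(1-x)H} dx`. -/
theorem hasDerivAt_exp_perturbation {n : Type*} [Fintype n] [DecidableEq n]
    (H V : Matrix n n ℂ) :
    HasDerivAt (fun s : ℝ => NormedSpace.exp (H + s • V))
      (∫ x in (0 : ℝ)..(1 : ℝ),
        NormedSpace.exp (x • H) * V * NormedSpace.exp ((1 - x) • H))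
      0 := by
  set G : ℝ → ℝ → Matrix n n ℂ := fun s x => exp (x • (H + s • V)) * V * exp ((1 - x) • H)
  have hG : Continuous fun s => ∫ x in (0 : ℝ)..1, G s x :=
    intervalIntegral.continuous_parametric_intervalIntegral_of_continuous' (by fun_prop) 0 1
  have hduhamel (s : ℝ) :
      exp (H + s • V) - exp (H + (0 : ℝ) • V) = (s - 0) • ∫ x in (0 : ℝ)..1, G s x := by
    simp only [zero_smul, add_zero, sub_zero, Matrix.exp_sub_exp_eq_integral,
      add_sub_cancel_left, mul_smul_comm, smul_mul_assoc, intervalIntegral.integral_smul, G]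
  have h := hasDerivAt_of_sub_eq_smul hG.continuousAt hduhamel
  simp only [G, zero_smul, add_zero] at h
  -- `simpa` fails here: the goal's `HasDerivAt` carries the bare matrix instances, which agree
  -- with the normed ones only up to unfolding, as `exact` checks.
  exact h

end CMI
end
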